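/- Let R be a commutative unital ring and A an unbounded cochain complex of R-modules which is bounded above (A^n = 0 for all sufficiently large n) and such that A^n is a projective R-module for every n ∈ ℤ. Then A is cofibrant: the unique map 0 → A has the left lifting property with respect to every degreewise surjective quasi-isomorphism of cochain complexes of R-modules. -/

import Mathlib

/-!
The kernel `K` of a degreewise surjective quasi-isomorphism `p : X ⟶ Y` is acyclic, by the long
exact homology sequence of `0 ⟶ K ⟶ X ⟶ Y ⟶ 0`. A lift of `v : A ⟶ Y` through `p` is built
degree by degree, downwards from the degrees where `A` vanishes. In degree `n`, projectivity of
`A^n` gives some `g₀` with `p ∘ g₀ = v`; if `g` is the lift already chosen in degree `n + 1`, the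
defect `d ∘ g₀ - g ∘ d` maps `A^n` into the cycles of `K^{n+1}`, so by acyclicity of `K` and
projectivity of `A^n` it equals `d ∘ h` for some `h : A^n ⟶ K^n`, and `g₀ - h` is the lift in
degree `n`.
-/

open CategoryTheory Limits ZeroObject

noncomputable section

variable (R : Type) [CommRing R]

/-- The category of unbounded cochain complexes of `R`-modules. -/
abbrev Cx := CochainComplex (ModuleCat.{0} R) ℤ

/-- The underlying module of `D_R(n)` in degree `i`: it is (isomorphic to) `R` if
`i = n` or `i = n+1`, and the zero module otherwise. -/
abbrev diskFun (n i : ℤ) : Type := PLift (i = n ∨ i = n + 1) → R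

/-- The differential of the disk complex `D_R(n)`. -/
def diskD (n i j : ℤ) : (diskFun R n i) →ₗ[R] (diskFun R n j) where
  toFun f _ := if hij : i = n ∧ j = n + 1 then f ⟨Or.inl hij.1⟩ else 0
  map_add' f g := by
    funext h
    by_cases hij : i = n ∧ j = n + 1 <;> simp [hij]
  map_smul' r f := by
    funext h
    by_cases hij : i = n ∧ j = n + 1 <;> simp [hij]

lemma diskD_apply (n i j : ℤ) (f : diskFun R n i) (h : PLift (j = n ∨ j = n + 1)) :
    diskD R n i j f h = if hij : i = n ∧ j = n + 1 then f ⟨Or.inl hij.1⟩ else 0 := rfl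

/-- The disk complex `D_R(n)`, with `R` in degrees `n` and `n+1`, the identity as the only
non-trivial differential, and `0` elsewhere. -/
def disk (n : ℤ) : Cx R where
  X i := ModuleCat.of R (diskFun R n i)
  d i j := ModuleCat.ofHom (diskD R n i j)
  shape i j hij := by
    apply ModuleCat.hom_ext
    apply LinearMap.ext
    intro f
    funext h
    have hn : ¬ (i = n ∧ j = n + 1) := by
      rintro ⟨rfl, rfl⟩
      exact hij rfl
    show diskD R n i j f h = _
    rw [diskD_apply, dif_neg hn]
    rfl
  d_comp_d' i j k _ _ := by
    apply ModuleCat.hom_ext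
    apply LinearMap.ext
    intro f
    funext h
    show diskD R n j k (diskD R n i j f) h = _
    rw [diskD_apply]
    split_ifs with hjk
    · rw [diskD_apply]
      have hn : ¬ (i = n ∧ j = n + 1) := by
        obtain ⟨h1, h2⟩ := hjk
        rintro ⟨rfl, h3⟩
        omega
      rw [dif_neg hn]
      rfl
    · rfl

/-- The underlying module of `S_R(n)` in degree `i`. -/
abbrev sphereFun (n i : ℤ) : Type := PLift (i = n) → R

/-- The sphere complex `S_R(n)`, with `R` in degree `n` and `0` elsewhere. -/
def sphere (n : ℤ) : Cx R where
  X i := ModuleCat.of R (sphereFun R n i)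
  d _ _ := 0
  shape _ _ _ := rfl
  d_comp_d' := by intros; simp

/-- The degreewise component of the map `S_R(n+1) ⟶ D_R(n)`. -/
def sphereToDiskHom (n i : ℤ) : (sphereFun R (n + 1) i) →ₗ[R] (diskFun R n i) where
  toFun g _ := if hi : i = n + 1 then g ⟨hi⟩ else 0
  map_add' g₁ g₂ := by
    funext h
    by_cases hi : i = n + 1 <;> simp [hi]
  map_smul' r g := by
    funext h
    by_cases hi : i = n + 1 <;> simp [hi]

lemma sphereToDiskHom_apply (n i : ℤ) (g : sphereFun R (n + 1) i)
    (h : PLift (i = n ∨ i = n + 1)) :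
    sphereToDiskHom R n i g h = if hi : i = n + 1 then g ⟨hi⟩ else 0 := rfl

/-- The map `S_R(n+1) ⟶ D_R(n)` which is the identity of `R` in degree `n+1`. -/
def sphereToDisk (n : ℤ) : sphere R (n + 1) ⟶ disk R n where
  f i := ModuleCat.ofHom (sphereToDiskHom R n i)
  comm' i j _ := by
    apply ModuleCat.hom_ext
    apply LinearMap.ext
    intro g
    funext h
    show diskD R n i j (sphereToDiskHom R n i g) h = sphereToDiskHom R n j ((0 : _ →ₗ[R] _) g) h
    simp only [LinearMap.zero_apply, map_zero, Pi.zero_apply]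
    rw [diskD_apply]
    split_ifs with hij
    · change (if hi : i = n + 1 then g ⟨hi⟩ else 0) = 0
      have hn : ¬ i = n + 1 := by
        obtain ⟨h1, h2⟩ := hij
        omega
      rw [dif_neg hn]
    · rfl

/-- A map of cochain complexes is degreewise surjective if it is surjective in each degree. -/
def DegSurj {M N : Cx R} (p : M ⟶ N) : Prop := ∀ n : ℤ, Function.Surjective (p.f n)



/-- `f` is a retract of `g` in the arrow category: there are morphisms of arrows
`f → g → f` composing to the identity of `f`. -/
def IsRetractOf {C : Type 1} [Category.{0} C] {X Y X' Y' : C} (f : X ⟶ Y) (g : X' ⟶ Y') : Prop :=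
  ∃ (i : Arrow.mk f ⟶ Arrow.mk g) (r : Arrow.mk g ⟶ Arrow.mk f), i ≫ r = 𝟙 (Arrow.mk f)

/-- The generating trivial cofibration `0 ⟶ D_R(n)`. -/
def zeroToDisk (n : ℤ) : (0 : Cx R) ⟶ disk R n := 0

/-- A cochain complex `A` is cofibrant if `0 ⟶ A` has the left lifting property with respect
to every degreewise surjective quasi-isomorphism. -/
def Cofibrant (A : Cx R) : Prop :=
  ∀ {X Y : Cx R} (p : X ⟶ Y), (∀ n : ℤ, Function.Surjective (p.f n)) → QuasiIso p →
    HasLiftingProperty (0 : (0 : Cx R) ⟶ A) p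

/-- A morphism of cochain complexes is a cofibration (for the projective model structure) if it
has the left lifting property with respect to every degreewise surjective quasi-isomorphism. -/
def Cofib {M N : Cx R} (i : M ⟶ N) : Prop :=
  ∀ {X Y : Cx R} (p : X ⟶ Y), (∀ n : ℤ, Function.Surjective (p.f n)) → QuasiIso p →
    HasLiftingProperty i p

namespace HomologicalComplex

variable {C ι : Type*} [Category C] [Abelian C] {c : ComplexShape ι}
  {X Y : HomologicalComplex C c} (p : X ⟶ Y) [Epi p]

lemma shortExact_kernel_ι : (ShortComplex.mk (kernel.ι p) p (kernel.condition p)).ShortExact where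
  exact := ShortComplex.exact_kernel p

lemma exists_comp_d_eq_of_quasiIso [QuasiIso p] {P : C} [Projective P] {i j k : ι}
    (hi : c.prev j = i) (hk : c.next j = k) (e : P ⟶ X.X j) (hep : e ≫ p.f j = 0)
    (hed : e ≫ X.d j k = 0) :
    ∃ h : P ⟶ X.X i, h ≫ p.f i = 0 ∧ h ≫ X.d i j = e := by
  have hS := shortExact_kernel_ι p
  have hKacyclic : (kernel p).Acyclic := hS.acyclic_X₁ ‹_›
  have hSj := hS.map (eval C c j)
  have := hSj.mono_f
  let κ := kernel.ι p
  obtain ⟨e', he'⟩ : ∃ e' : P ⟶ (kernel p).X j, e' ≫ κ.f j = e :=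
    ⟨hSj.exact.lift e hep, hSj.exact.lift_f e hep⟩
  have he'd : e' ≫ (kernel p).d j k = 0 := by
    have : Mono (κ.f k) := (hS.map (eval C c k)).mono_f
    rw [← cancel_mono (κ.f k), Category.assoc, ← κ.comm, ← Category.assoc, he', hed, zero_comp]
  have hK : ((kernel p).sc' i j k).Exact :=
    ((kernel p).exactAt_iff' i j k hi hk).1 (hKacyclic j)
  obtain ⟨h, hh⟩ : ∃ h : P ⟶ (kernel p).X i, h ≫ (kernel p).d i j = e' :=
    ⟨hK.liftFromProjective e' he'd, hK.liftFromProjective_comp e' he'd⟩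
  refine ⟨h ≫ κ.f i, ?_, ?_⟩
  · rw [Category.assoc, ← comp_f, kernel.condition, zero_f, comp_zero]
  · rw [Category.assoc, κ.comm, ← Category.assoc, hh, he']

lemma exists_lift_of_lift_next [QuasiIso p] {A : HomologicalComplex C c} (v : A ⟶ Y) {i j k : ι}
    (hi : c.prev j = i) (hk : c.next j = k) [Projective (A.X i)] (g₁ : A.X j ⟶ X.X j)
    (g₂ : A.X k ⟶ X.X k) (hg₁ : g₁ ≫ p.f j = v.f j) (hcomm : g₁ ≫ X.d j k = A.d j k ≫ g₂) :
    ∃ g : A.X i ⟶ X.X i, g ≫ p.f i = v.f i ∧ g ≫ X.d i j = A.d i j ≫ g₁ := by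
  let g₀ := Projective.factorThru (v.f i) (p.f i)
  obtain ⟨h, hhp, hhd⟩ := exists_comp_d_eq_of_quasiIso p hi hk (g₀ ≫ X.d i j - A.d i j ≫ g₁)
    (by rw [Preadditive.sub_comp, Category.assoc, ← p.comm, Category.assoc, hg₁,
      Projective.factorThru_comp_assoc, v.comm, sub_self])
    (by simp [hcomm])
  exact ⟨g₀ - h, by simp [g₀, hhp], by simp [hhd]⟩

end HomologicalComplex

namespace CochainComplex

variable {C : Type*} [Category C] [Abelian C] {X Y A : CochainComplex C ℤ}
  (p : X ⟶ Y) (v : A ⟶ Y)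

def IsPartialLift (g : ∀ m, A.X m ⟶ X.X m) (n : ℤ) : Prop :=
  ∀ m, n ≤ m → g m ≫ p.f m = v.f m ∧ g m ≫ X.d m (m + 1) = A.d m (m + 1) ≫ g (m + 1)

variable {p v}

lemma isPartialLift_zero {n : ℤ} (hA : ∀ m, n ≤ m → IsZero (A.X m)) :
    IsPartialLift p v (fun _ => 0) n :=
  fun m hm => ⟨(hA m hm).eq_of_src _ _, (hA m hm).eq_of_src _ _⟩

lemma IsPartialLift.mono {g : ∀ m, A.X m ⟶ X.X m} {n n' : ℤ} (hg : IsPartialLift p v g n)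
    (h : n ≤ n') : IsPartialLift p v g n' :=
  fun m hm => hg m (h.trans hm)

lemma IsPartialLift.exists_extend [Epi p] [QuasiIso p] [∀ m, Projective (A.X m)]
    {g : ∀ m, A.X m ⟶ X.X m} {n : ℤ} (hg : IsPartialLift p v g (n + 1)) :
    ∃ g', IsPartialLift p v g' n ∧ ∀ m, n + 1 ≤ m → g' m = g m := by
  obtain ⟨g₀, hg₀p, hg₀d⟩ := HomologicalComplex.exists_lift_of_lift_next p v
    (i := n) (j := n + 1) (k := n + 1 + 1) (by simp) (by simp)
    (g (n + 1)) (g (n + 1 + 1)) (hg (n + 1) le_rfl).1 (hg (n + 1) le_rfl).2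
  refine ⟨Function.update g n g₀, fun m hm => ?_,
    fun m hm => Function.update_of_ne (by omega) _ _⟩
  obtain rfl | hlt := hm.eq_or_lt
  · simpa [Function.update_of_ne] using ⟨hg₀p, hg₀d⟩
  · simpa [Function.update_of_ne hlt.ne', Function.update_of_ne (by omega : m + 1 ≠ n)]
      using hg m hlt

lemma exists_seq_isPartialLift [Epi p] [QuasiIso p] [∀ m, Projective (A.X m)] {n₀ : ℤ}
    (hA : ∀ m, n₀ ≤ m → IsZero (A.X m)) :
    ∃ G : ℕ → ∀ m, A.X m ⟶ X.X m, (∀ k : ℕ, IsPartialLift p v (G k) (n₀ - k)) ∧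
      ∀ k k' : ℕ, k ≤ k' → ∀ m, n₀ - k ≤ m → G k' m = G k m := by
  choose! extend hextend hagree using
    fun n (g : ∀ m, A.X m ⟶ X.X m) (hg : IsPartialLift p v g (n + 1)) => hg.exists_extend
  let G : ℕ → ∀ m, A.X m ⟶ X.X m :=
    fun k => k.rec (fun _ => 0) fun k g => extend (n₀ - (k + 1)) g
  have hG : ∀ k : ℕ, IsPartialLift p v (G k) (n₀ - k) := by
    intro k
    induction k with
    | zero => exact (isPartialLift_zero hA).mono (by simp)
    | succ k ih => exact_mod_cast hextend _ _ (ih.mono (by omega))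
  refine ⟨G, hG, fun k k' hkk' m hm => ?_⟩
  induction k', hkk' using Nat.le_induction with
  | base => rfl
  | succ k' _ ih =>
    rw [← ih]
    exact hagree _ _ ((hG k').mono (by omega)) m (by omega)

variable (p v) in
theorem exists_comp_eq_of_isZero [Epi p] [QuasiIso p] [∀ m, Projective (A.X m)] {n₀ : ℤ}
    (hA : ∀ m, n₀ ≤ m → IsZero (A.X m)) : ∃ l : A ⟶ X, l ≫ p = v := by
  obtain ⟨G, hG, hstable⟩ := exists_seq_isPartialLift (p := p) (v := v) hA
  let l m := G (n₀ - m).toNat m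
  have hl : ∀ (k : ℕ) m, n₀ - k ≤ m → l m = G k m := fun k m hm => by
    rcases le_total (n₀ - m).toNat k with h | h
    · exact (hstable _ _ h m (by omega)).symm
    · exact hstable _ _ h m hm
  refine ⟨{ f := l, comm' := ?_ }, ?_⟩
  · rintro m _ rfl
    rw [hl (n₀ - m).toNat (m + 1) (by omega)]
    exact (hG (n₀ - m).toNat m (by omega)).2
  · ext m
    exact (hG (n₀ - m).toNat m (by omega)).1

end CochainComplex

theorem statement_4 (A : Cx R) (hbd : ∃ n₀ : ℤ, ∀ n : ℤ, n₀ ≤ n → IsZero (A.X n))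
    (hproj : ∀ n : ℤ, Module.Projective R (A.X n)) : Cofibrant R A := by
  intro X Y p hp _
  obtain ⟨n₀, hA⟩ := hbd
  have : Epi p := HomologicalComplex.epi_of_epi_f _ fun n =>
    (ModuleCat.epi_iff_surjective _).2 (hp n)
  refine ⟨fun {_ v} _ => ?_⟩
  obtain ⟨l, hl⟩ := CochainComplex.exists_comp_eq_of_isZero p v hA
  exact ⟨⟨⟨l, (isZero_zero _).eq_of_src _ _, hl⟩⟩⟩

end
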